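/- arXiv:1902.03706 — 2 statements merged into one kernel-verified Lean document; each statement's English description precedes it below -/
import Mathlib

section
/- Suppose f is submodular with f(∅)=0 and f(X) = ∑_{C∈P} f(X∩C) for all X ⊆ V for a partition P of V. Let g(x) = ∑_{i∈V} x_i²/w_i with w_i > 0. Then the unique minimizer x* of g over B(f) is the direct sum ⊕_{C∈P} x*_C where each x*_C is the unique minimizer of ∑_{i∈C} x_i²/w_i over the base polyhedron B_C(f) of the restriction of f to subsets of C. -/
/-!
The objective is separable and the constraints defining `B(f)` split along the partition: by
additivity of `f`, a vector lies in `B(f)` iff each of its blocks lies in the block base polyhedron,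
because the block inequalities `x(C) ≤ f(C)` sum to the equality `x(V) = f(V)` and so are all tight.
Hence `B(f)` is the product of the `B_C(f)` and a separable function is minimized on a product
exactly when each block is minimized, the competitor for one block being obtained by replacing
only that block of `x`.
-/

open Finset

section BasePolyhedron

variable {V : Type*}

def basePolyhedron (f : Finset V → ℝ) (C : Finset V) : Set (V → ℝ) :=
  {y | (∀ X ⊆ C, ∑ k ∈ X, y k ≤ f X) ∧ ∑ k ∈ C, y k = f C}

theorem basePolyhedron_congr {f : Finset V → ℝ} {C : Finset V} {y z : V → ℝ}
    (hyz : ∀ i ∈ C, y i = z i) (hy : y ∈ basePolyhedron f C) : z ∈ basePolyhedron f C := by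
  have hsum : ∀ X ⊆ C, ∑ k ∈ X, z k = ∑ k ∈ X, y k := fun X hX =>
    sum_congr rfl fun k hk => (hyz k (hX hk)).symm
  exact ⟨fun X hX => hsum X hX ▸ hy.1 X hX, hsum C subset_rfl ▸ hy.2⟩

variable [DecidableEq V] {P : Finset (Finset V)}

theorem sum_eq_sum_sum_inter {β : Type*} [AddCommMonoid β]
    (hdisj : (P : Set (Finset V)).PairwiseDisjoint id)
    (hcover : ∀ i : V, ∃ C ∈ P, i ∈ C) (X : Finset V) (h : V → β) :
    ∑ k ∈ X, h k = ∑ C ∈ P, ∑ k ∈ X ∩ C, h k := by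
  have hX : X = P.biUnion (X ∩ ·) := by
    ext i
    simp only [mem_biUnion, mem_inter]
    refine ⟨fun hi => ?_, fun ⟨_, _, hi, _⟩ => hi⟩
    obtain ⟨C, hC, hiC⟩ := hcover i
    exact ⟨C, hC, hi, hiC⟩
  conv_lhs => rw [hX]
  exact sum_biUnion fun C hC C' hC' hne =>
    (hdisj hC hC' hne).mono inter_subset_right inter_subset_right

theorem sum_univ_eq_sum_sum [Fintype V] {β : Type*} [AddCommMonoid β]
    (hdisj : (P : Set (Finset V)).PairwiseDisjoint id)
    (hcover : ∀ i : V, ∃ C ∈ P, i ∈ C) (h : V → β) : ∑ k, h k = ∑ C ∈ P, ∑ k ∈ C, h k := by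
  simpa only [univ_inter] using sum_eq_sum_sum_inter hdisj hcover univ h

theorem mem_basePolyhedron_univ_iff [Fintype V] {f : Finset V → ℝ}
    (hdisj : (P : Set (Finset V)).PairwiseDisjoint id)
    (hcover : ∀ i : V, ∃ C ∈ P, i ∈ C)
    (hdec : ∀ X : Finset V, f X = ∑ C ∈ P, f (X ∩ C)) (z : V → ℝ) :
    z ∈ basePolyhedron f univ ↔ ∀ C ∈ P, z ∈ basePolyhedron f C := by
  have hdec_univ : f univ = ∑ C ∈ P, f C := by simpa only [univ_inter] using hdec univ
  constructor
  · rintro ⟨hle, heq⟩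
    have htight : ∀ C ∈ P, ∑ k ∈ C, z k = f C :=
      (sum_eq_sum_iff_of_le fun C _ => hle C (subset_univ C)).mp <| by
        rw [← sum_univ_eq_sum_sum hdisj hcover, heq, hdec_univ]
    exact fun C hC => ⟨fun X _ => hle X (subset_univ X), htight C hC⟩
  · intro hblocks
    refine ⟨fun X _ => ?_, ?_⟩
    · rw [sum_eq_sum_sum_inter hdisj hcover X z, hdec X]
      exact sum_le_sum fun C hC => (hblocks C hC).1 _ inter_subset_right
    · rw [sum_univ_eq_sum_sum hdisj hcover z, hdec_univ]
      exact sum_congr rfl fun C hC => (hblocks C hC).2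

theorem piecewise_mem_basePolyhedron (hdisj : (P : Set (Finset V)).PairwiseDisjoint id)
    {f : Finset V → ℝ} {C : Finset V} (hC : C ∈ P)
    {x y : V → ℝ} (hx : ∀ C' ∈ P, x ∈ basePolyhedron f C') (hy : y ∈ basePolyhedron f C) :
    ∀ C' ∈ P, C.piecewise y x ∈ basePolyhedron f C' := by
  intro C' hC'
  by_cases hCC' : C' = C
  · subst hCC'
    exact basePolyhedron_congr (fun i hi => (piecewise_eq_of_mem _ _ _ hi).symm) hy
  · refine basePolyhedron_congr (fun i hi => ?_) (hx C' hC')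
    exact (piecewise_eq_of_notMem _ _ _ (disjoint_left.mp (hdisj hC' hC hCC') hi)).symm

theorem isMinOn_basePolyhedron_univ_iff [Fintype V] {f : Finset V → ℝ}
    (hdisj : (P : Set (Finset V)).PairwiseDisjoint id)
    (hcover : ∀ i : V, ∃ C ∈ P, i ∈ C)
    (hdec : ∀ X : Finset V, f X = ∑ C ∈ P, f (X ∩ C)) (φ : V → ℝ → ℝ) {x : V → ℝ} :
    (x ∈ basePolyhedron f univ ∧
        IsMinOn (fun z => ∑ i, φ i (z i)) (basePolyhedron f univ) x) ↔
      ∀ C ∈ P, x ∈ basePolyhedron f C ∧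
        IsMinOn (fun z => ∑ i ∈ C, φ i (z i)) (basePolyhedron f C) x := by
  simp only [mem_basePolyhedron_univ_iff hdisj hcover hdec, isMinOn_iff]
  constructor
  · rintro ⟨hx, hmin⟩ C hC
    refine ⟨hx C hC, fun y hy => ?_⟩
    have hle := hmin _ (piecewise_mem_basePolyhedron hdisj hC hx hy)
    rw [← sum_add_sum_compl C, ← sum_add_sum_compl C (fun i => φ i _)] at hle
    have hin : ∑ i ∈ C, φ i (C.piecewise y x i) = ∑ i ∈ C, φ i (y i) :=
      sum_congr rfl fun i hi => by rw [piecewise_eq_of_mem _ _ _ hi]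
    have hout : ∑ i ∈ Cᶜ, φ i (C.piecewise y x i) = ∑ i ∈ Cᶜ, φ i (x i) :=
      sum_congr rfl fun i hi => by rw [piecewise_eq_of_notMem _ _ _ (mem_compl.mp hi)]
    linarith
  · intro hblocks
    refine ⟨fun C hC => (hblocks C hC).1, fun y hy => ?_⟩
    rw [sum_univ_eq_sum_sum hdisj hcover, sum_univ_eq_sum_sum hdisj hcover]
    exact sum_le_sum fun C hC => (hblocks C hC).2 y (hy C hC)

end BasePolyhedron

theorem egalitarian_decomposition_general {V : Type*} [Fintype V] [DecidableEq V]
    (f : Finset V → ℝ) (P : Finset (Finset V))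
    (hdisj : ∀ C ∈ P, ∀ C' ∈ P, C ≠ C' → Disjoint C C')
    (hcover : ∀ i : V, ∃ C ∈ P, i ∈ C)
    (hdec : ∀ X : Finset V, f X = ∑ C ∈ P, f (X ∩ C))
    (w : V → ℝ) (x : V → ℝ) :
    (((∀ X : Finset V, ∑ k ∈ X, x k ≤ f X) ∧ ∑ k, x k = f Finset.univ) ∧
      (∀ y : V → ℝ,
        ((∀ X : Finset V, ∑ k ∈ X, y k ≤ f X) ∧ ∑ k, y k = f Finset.univ) →
        ∑ i, x i ^ 2 / w i ≤ ∑ i, y i ^ 2 / w i))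
    ↔
    (∀ C ∈ P,
      ((∀ X : Finset V, X ⊆ C → ∑ k ∈ X, x k ≤ f X) ∧ ∑ k ∈ C, x k = f C) ∧
      (∀ y : V → ℝ,
        ((∀ X : Finset V, X ⊆ C → ∑ k ∈ X, y k ≤ f X) ∧ ∑ k ∈ C, y k = f C) →
        ∑ i ∈ C, x i ^ 2 / w i ≤ ∑ i ∈ C, y i ^ 2 / w i)) := by
  have h := isMinOn_basePolyhedron_univ_iff hdisj hcover hdec (fun i t => t ^ 2 / w i) (x := x)
  simpa only [basePolyhedron, isMinOn_iff, Set.mem_ofPred_eq, subset_univ, forall_const] using h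

/-- Decomposition of the weighted egalitarian solution: if a submodular `f`
with `f ∅ = 0` decomposes additively across a partition `P` of `V`, then `x`
minimizes `g(x) = ∑ i, x i ^ 2 / w i` over the base polyhedron `B(f)` if and
only if, for each block `C ∈ P`, the restriction of `x` to `C` lies in the
base polyhedron `B_C(f)` of the subgame on `C` and minimizes the block
objective `∑ i ∈ C, x i ^ 2 / w i` there. -/
theorem egalitarian_decomposition {V : Type*} [Fintype V] [DecidableEq V]
    (f : Finset V → ℝ) (P : Finset (Finset V))
    (h0 : f ∅ = 0)
    (hsub : ∀ X Y : Finset V, f (X ∪ Y) + f (X ∩ Y) ≤ f X + f Y)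
    (hne : ∀ C ∈ P, C.Nonempty)
    (hdisj : ∀ C ∈ P, ∀ C' ∈ P, C ≠ C' → Disjoint C C')
    (hcover : ∀ i : V, ∃ C ∈ P, i ∈ C)
    (hdec : ∀ X : Finset V, f X = ∑ C ∈ P, f (X ∩ C))
    (w : V → ℝ) (hw : ∀ i, 0 < w i) (x : V → ℝ) :
    (((∀ X : Finset V, ∑ k ∈ X, x k ≤ f X) ∧ ∑ k, x k = f Finset.univ) ∧
      (∀ y : V → ℝ,
        ((∀ X : Finset V, ∑ k ∈ X, y k ≤ f X) ∧ ∑ k, y k = f Finset.univ) →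
        ∑ i, x i ^ 2 / w i ≤ ∑ i, y i ^ 2 / w i))
    ↔
    (∀ C ∈ P,
      ((∀ X : Finset V, X ⊆ C → ∑ k ∈ X, x k ≤ f X) ∧ ∑ k ∈ C, x k = f C) ∧
      (∀ y : V → ℝ,
        ((∀ X : Finset V, X ⊆ C → ∑ k ∈ X, y k ≤ f X) ∧ ∑ k ∈ C, y k = f C) →
        ∑ i ∈ C, x i ^ 2 / w i ≤ ∑ i ∈ C, y i ^ 2 / w i)) :=
  egalitarian_decomposition_general f P hdisj hcover hdec w x
end

section
/- Let f be submodular with f(∅)=0 and x, y ∈ B(f) with x ≠ y. Then there exist i, j ∈ V with x_i > y_i and x_j < y_j, and an ε > 0, such that x + ε(χ_j − χ_i) ∈ B(f). (One can always make an elementary exchange from x strictly toward y within the base polyhedron.) -/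
/-!
Pick `j` with `x j < y j`. Tight sets of `x` (those `X` with `x(X) = f X`) are closed under
intersection by submodularity, so there is a least tight set `D ∋ j`. Since `y(D) ≤ f D = x(D)`
and `x j < y j`, some `i ∈ D` has `y i < x i`. Every set containing `j` but not `i` is then
not tight, so it has positive slack `f X - x(X)`, and a step `ε` below all these finitely many
slacks keeps `x + ε (χ_j - χ_i)` in `B(f)`.
-/

open Finset

section Sums

variable {ι M : Type*} [AddCommMonoid M] [LinearOrder M] [IsOrderedCancelAddMonoid M]

theorem Finset.exists_lt_of_sum_le_of_lt {s : Finset ι} {x y : ι → M}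
    (hsum : ∑ k ∈ s, y k ≤ ∑ k ∈ s, x k) {j : ι} (hj : j ∈ s) (hxy : x j < y j) :
    ∃ i ∈ s, y i < x i := by
  contrapose! hsum
  exact sum_lt_sum hsum ⟨j, hj, hxy⟩

theorem Fintype.exists_lt_of_sum_eq_of_ne [Fintype ι] {x y : ι → M}
    (hsum : ∑ k, x k = ∑ k, y k) (hne : x ≠ y) : ∃ j, x j < y j := by
  obtain ⟨k, hk⟩ := Function.ne_iff.mp hne
  rcases hk.lt_or_gt with hlt | hgt
  · exact ⟨k, hlt⟩
  · obtain ⟨j, -, hj⟩ := exists_lt_of_sum_le_of_lt hsum.le (mem_univ k) hgt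
    exact ⟨j, hj⟩

end Sums

theorem exists_pos_forall_le_of_forall_pos {α R : Type*} [Finite α] [Semiring R] [LinearOrder R]
    [IsStrictOrderedRing R] {p : α → Prop} {g : α → R}
    (hg : ∀ a, p a → 0 < g a) : ∃ ε > 0, ∀ a, p a → ε ≤ g a := by
  classical
  have := Fintype.ofFinite α
  let values := insert 1 ((univ.filter p).image g)
  have hne : values.Nonempty := insert_nonempty _ _
  refine ⟨values.min' hne, ?_, fun a ha => values.min'_le _ ?_⟩
  · rw [gt_iff_lt, lt_min'_iff]
    simp only [values, mem_insert, mem_image, mem_filter, mem_univ, true_and]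
    rintro _ (rfl | ⟨a, ha, rfl⟩)
    exacts [one_pos, hg a ha]
  · exact mem_insert_of_mem (mem_image_of_mem g (mem_filter.mpr ⟨mem_univ a, ha⟩))

section Exchange

variable {V : Type*} [DecidableEq V]

theorem sum_add_exchange (x : V → ℝ) (ε : ℝ) (i j : V) (X : Finset V) :
    ∑ k ∈ X, (x k + ε * ((if k = j then 1 else 0) - (if k = i then 1 else 0))) =
      ∑ k ∈ X, x k + ε * ((if j ∈ X then 1 else 0) - (if i ∈ X then 1 else 0)) := by
  rw [sum_add_distrib, ← mul_sum, sum_sub_distrib, sum_ite_eq', sum_ite_eq']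

theorem sum_add_exchange_le {f : Finset V → ℝ} {x : V → ℝ} (hx : ∀ X, ∑ k ∈ X, x k ≤ f X)
    {i j : V} {ε : ℝ} (hε : 0 ≤ ε) (hslack : ∀ X, j ∈ X → i ∉ X → ε ≤ f X - ∑ k ∈ X, x k)
    (X : Finset V) :
    ∑ k ∈ X, (x k + ε * ((if k = j then 1 else 0) - (if k = i then 1 else 0))) ≤ f X := by
  rw [sum_add_exchange]
  have := hx X
  by_cases hjX : j ∈ X <;> by_cases hiX : i ∈ X
  · simpa [hjX, hiX]
  · have := hslack X hjX hiX
    simp only [hjX, hiX, if_true, if_false]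
    linarith
  · simp only [hjX, hiX, if_true, if_false]
    linarith
  · simpa [hjX, hiX]

end Exchange

section TightSets

variable {V : Type*} [DecidableEq V] {f : Finset V → ℝ} {x : V → ℝ}

theorem sum_inter_eq_of_submodular (hsub : ∀ X Y, f (X ∪ Y) + f (X ∩ Y) ≤ f X + f Y)
    (hx : ∀ X, ∑ k ∈ X, x k ≤ f X) {X Y : Finset V}
    (hX : ∑ k ∈ X, x k = f X) (hY : ∑ k ∈ Y, x k = f Y) :
    ∑ k ∈ X ∩ Y, x k = f (X ∩ Y) := by
  have hmod : ∑ k ∈ X ∪ Y, x k + ∑ k ∈ X ∩ Y, x k = ∑ k ∈ X, x k + ∑ k ∈ Y, x k :=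
    sum_union_inter
  linarith [hsub X Y, hx (X ∪ Y), hx (X ∩ Y)]

variable [Fintype V]

theorem sum_inf_eq_of_submodular (hsub : ∀ X Y, f (X ∪ Y) + f (X ∩ Y) ≤ f X + f Y)
    (hx : ∀ X, ∑ k ∈ X, x k ≤ f X) {S : Finset (Finset V)} (hS : S.Nonempty)
    (htight : ∀ X ∈ S, ∑ k ∈ X, x k = f X) :
    ∑ k ∈ S.inf id, x k = f (S.inf id) := by
  induction hS using Nonempty.cons_induction with
  | singleton X => simpa using htight X (mem_singleton_self X)
  | cons X S hX _ ih =>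
    rw [inf_cons]
    exact sum_inter_eq_of_submodular hsub hx (htight X (mem_cons_self X S))
      (ih fun Y hY => htight Y (mem_cons_of_mem hY))

/-- The least tight set of `x` containing `j`; Fujishige's `dep(x, j)`. -/
noncomputable def dep (f : Finset V → ℝ) (x : V → ℝ) (j : V) : Finset V :=
  ((univ : Finset (Finset V)).filter fun X => j ∈ X ∧ ∑ k ∈ X, x k = f X).inf id

theorem mem_dep (j : V) : j ∈ dep f x j := by
  have : {j} ≤ dep f x j := Finset.le_inf fun X hX => by simpa using (mem_filter.mp hX).2.1
  exact this (mem_singleton_self j)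

theorem dep_subset {j : V} {X : Finset V} (hjX : j ∈ X) (hX : ∑ k ∈ X, x k = f X) :
    dep f x j ⊆ X :=
  inf_le (mem_filter.mpr ⟨mem_univ X, hjX, hX⟩)

theorem sum_dep_eq (hsub : ∀ X Y, f (X ∪ Y) + f (X ∩ Y) ≤ f X + f Y)
    (hx : ∀ X, ∑ k ∈ X, x k ≤ f X) (huniv : ∑ k, x k = f univ) (j : V) :
    ∑ k ∈ dep f x j, x k = f (dep f x j) :=
  sum_inf_eq_of_submodular hsub hx ⟨univ, mem_filter.mpr ⟨mem_univ _, mem_univ j, huniv⟩⟩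
    fun _ hX => (mem_filter.mp hX).2.2

theorem sum_lt_of_mem_dep (hx : ∀ X, ∑ k ∈ X, x k ≤ f X) {i j : V} (hi : i ∈ dep f x j)
    {X : Finset V} (hjX : j ∈ X) (hiX : i ∉ X) : ∑ k ∈ X, x k < f X :=
  (hx X).lt_of_ne fun hX => hiX (dep_subset hjX hX hi)

end TightSets

theorem exchange_towards_general {V : Type*} [Fintype V] [DecidableEq V]
    (f : Finset V → ℝ)
    (hsub : ∀ X Y : Finset V, f (X ∪ Y) + f (X ∩ Y) ≤ f X + f Y)
    (x y : V → ℝ)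
    (hx : (∀ X : Finset V, ∑ k ∈ X, x k ≤ f X) ∧ ∑ k, x k = f Finset.univ)
    (hy : (∀ X : Finset V, ∑ k ∈ X, y k ≤ f X) ∧ ∑ k, y k = f Finset.univ)
    (hxy : x ≠ y) :
    ∃ i j : V, y i < x i ∧ x j < y j ∧
      ∃ ε : ℝ, 0 < ε ∧
        (∀ X : Finset V,
          ∑ k ∈ X, (x k + ε * ((if k = j then 1 else 0) - (if k = i then 1 else 0))) ≤ f X) ∧
        ∑ k, (x k + ε * ((if k = j then 1 else 0) - (if k = i then 1 else 0))) =
          f Finset.univ := by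
  obtain ⟨hxle, hxuniv⟩ := hx
  obtain ⟨hyle, hyuniv⟩ := hy
  obtain ⟨j, hj⟩ := Fintype.exists_lt_of_sum_eq_of_ne (hxuniv.trans hyuniv.symm) hxy
  obtain ⟨i, hiD, hi⟩ : ∃ i ∈ dep f x j, y i < x i :=
    exists_lt_of_sum_le_of_lt ((hyle _).trans (sum_dep_eq hsub hxle hxuniv j).ge) (mem_dep j) hj
  obtain ⟨ε, hε, hslack⟩ : ∃ ε > 0, ∀ X : Finset V, j ∈ X ∧ i ∉ X → ε ≤ f X - ∑ k ∈ X, x k :=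
    exists_pos_forall_le_of_forall_pos fun X hX =>
      sub_pos.mpr (sum_lt_of_mem_dep hxle hiD hX.1 hX.2)
  refine ⟨i, j, hi, hj, ε, hε,
    sum_add_exchange_le hxle hε.le fun X hjX hiX => hslack X ⟨hjX, hiX⟩, ?_⟩
  simp [sum_add_exchange, hxuniv]

/-- Exchange property of base polyhedra: given two distinct points `x, y` of
the base polyhedron `B(f)` of a submodular `f` with `f ∅ = 0`, there are
coordinates `i` with `x i > y i` and `j` with `x j < y j` and a step `ε > 0`
such that `x + ε (χ_j - χ_i) ∈ B(f)`. -/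
theorem exchange_towards {V : Type*} [Fintype V] [DecidableEq V]
    (f : Finset V → ℝ) (h0 : f ∅ = 0)
    (hsub : ∀ X Y : Finset V, f (X ∪ Y) + f (X ∩ Y) ≤ f X + f Y)
    (x y : V → ℝ)
    (hx : (∀ X : Finset V, ∑ k ∈ X, x k ≤ f X) ∧ ∑ k, x k = f Finset.univ)
    (hy : (∀ X : Finset V, ∑ k ∈ X, y k ≤ f X) ∧ ∑ k, y k = f Finset.univ)
    (hxy : x ≠ y) :
    ∃ i j : V, y i < x i ∧ x j < y j ∧
      ∃ ε : ℝ, 0 < ε ∧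
        (∀ X : Finset V,
          ∑ k ∈ X, (x k + ε * ((if k = j then 1 else 0) - (if k = i then 1 else 0))) ≤ f X) ∧
        ∑ k, (x k + ε * ((if k = j then 1 else 0) - (if k = i then 1 else 0))) =
          f Finset.univ :=
  exchange_towards_general f hsub x y hx hy hxy
end
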